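/- Let D₁, D₂ be maximal isotropic subspaces of an orthogonal vector space E = V ⊕ V* (with canonical pairing) satisfying D₁ ∩ D₂ = 0. Then K = {(−ξ, ξ) : ξ ∈ V*} intersects the fiber product D₁ ⊕_V D₂ = {(d₁,d₂) : π(d₁) = π(d₂)} exactly in (D₁ ∩ V*) × (D₂ ∩ V*) ∩ diagonal-type elements, which is zero; hence the Baer sum D₁^⊤ ⊠ D₂ is isomorphic as a vector space to the fiber product D₁ ⊕_V D₂, and it equals the graph Γ_β of a skew map β : V* → V given by β = π ∘ P_{D₁}|_{V*}, where P_{D₁} is the projection onto D₁ along D₂. -/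

import Mathlib

/-! The projection `P` onto `D₁` along `D₂` exists because two transverse Lagrangians span `E`:
`(D₁ + D₂)^⊥ = D₁^⊥ ∩ D₂^⊥ = D₁ ∩ D₂ = 0`.  Writing `ξ ∈ V*` as `P ξ + (ξ - P ξ)` with the
summands isotropic shows `⟨η, P ξ⟩ + ⟨ξ, P η⟩ = ⟨ξ, η⟩ = 0`, and `⟨η, P ξ⟩ = ½ η(β ξ)`, so `β`
is skew.  A pair `(d₁, d₂)` with equal `V`-components has `d₁ - d₂ ∈ V*`, and `P (d₁ - d₂) = d₁`
gives `β (ξ₁ - ξ₂) = X`; conversely `ζ = P ζ - (P ζ - ζ)` realises every point of `Γ_β`. -/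

noncomputable section

/-- The canonical pairing on `V ⊕ V*`. -/
def pairE {V : Type*} [AddCommGroup V] [Module ℝ V]
    (a b : V × Module.Dual ℝ V) : ℝ :=
  (1/2) * (a.2 b.1 + b.2 a.1)

namespace LinearMap.BilinForm

section CommRing

variable {R M : Type*} [CommRing R] [AddCommGroup M] [Module R M] {B : LinearMap.BilinForm R M}

theorem IsRefl.orthogonal_eq_self_of_isotropic_of_maximal (hB : B.IsRefl) {D : Submodule R M}
    (hiso : ∀ a ∈ D, ∀ b ∈ D, B a b = 0) (hmax : ∀ e, (∀ d ∈ D, B e d = 0) → e ∈ D) :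
    B.orthogonal D = D :=
  le_antisymm (fun e he => hmax e fun d hd => hB d e (he d hd))
    (fun e he => mem_orthogonal_iff.mpr fun d hd => hiso d hd e he)

theorem apply_projection_add_apply_projection (hB : B.IsSymm) {p q : Submodule R M}
    (hp : ∀ a ∈ p, ∀ b ∈ p, B a b = 0) (hq : ∀ a ∈ q, ∀ b ∈ q, B a b = 0) (h : IsCompl p q)
    (e f : M) : B e (p.projection q h f) + B f (p.projection q h e) = B e f := by
  set P := p.projection q h
  set Q := q.projection p h.symm
  have hPQ (x : M) : P x + Q x = x := Submodule.projection_add_projection_eq_self h x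
  have hP (x y : M) : B (P x) (P y) = 0 := hp _ (by simp [P]) _ (by simp [P])
  have hQ (x y : M) : B (Q x) (Q y) = 0 := hq _ (by simp [Q]) _ (by simp [Q])
  calc B e (P f) + B f (P e) = B (P e + Q e) (P f) + B (P f + Q f) (P e) := by rw [hPQ, hPQ]
    _ = B (P e) (Q f) + B (Q e) (P f) := by
      simp only [map_add, LinearMap.add_apply, hP, hB.eq (Q f)]; ring
    _ = B (P e + Q e) (P f + Q f) := by simp only [map_add, LinearMap.add_apply, hP, hQ]; ring
    _ = B e f := by rw [hPQ, hPQ]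

end CommRing

variable {K V : Type*} [Field K] [AddCommGroup V] [Module K V] [FiniteDimensional K V]
  {B : LinearMap.BilinForm K V}

theorem IsRefl.isCompl_of_orthogonal_eq_self (hB₀ : B.IsRefl) (hB : B.Nondegenerate)
    {D₁ D₂ : Submodule K V} (h₁ : B.orthogonal D₁ = D₁) (h₂ : B.orthogonal D₂ = D₂)
    (h : D₁ ⊓ D₂ = ⊥) : IsCompl D₁ D₂ := by
  refine ⟨disjoint_iff.mpr h, codisjoint_iff.mpr ?_⟩
  have hsup : B.orthogonal (D₁ ⊔ D₂) = ⊥ := by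
    rw [eq_bot_iff, ← h]
    conv_rhs => rw [← h₁, ← h₂]
    exact le_inf (orthogonal_le le_sup_left) (orthogonal_le le_sup_right)
  rw [← orthogonal_orthogonal hB hB₀ (D₁ ⊔ D₂), hsup, orthogonal_bot]

end LinearMap.BilinForm

section Pairing

variable (V : Type*) [AddCommGroup V] [Module ℝ V]

def pairForm : LinearMap.BilinForm ℝ (V × Module.Dual ℝ V) :=
  LinearMap.mk₂ ℝ pairE
    (fun a a' b => by simp only [pairE, Prod.fst_add, Prod.snd_add, map_add,
      LinearMap.add_apply]; ring)
    (fun r a b => by simp only [pairE, Prod.smul_fst, Prod.smul_snd, map_smul,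
      LinearMap.smul_apply, smul_eq_mul]; ring)
    (fun a b b' => by simp only [pairE, Prod.fst_add, Prod.snd_add, map_add,
      LinearMap.add_apply]; ring)
    (fun r a b => by simp only [pairE, Prod.smul_fst, Prod.smul_snd, map_smul,
      LinearMap.smul_apply, smul_eq_mul]; ring)

variable {V}

@[simp]
theorem pairForm_apply (a b : V × Module.Dual ℝ V) : pairForm V a b = pairE a b := rfl

theorem pairForm_isSymm : (pairForm V).IsSymm :=
  ⟨fun a b => by simp only [pairForm_apply, pairE]; ring⟩

theorem pairForm_nondegenerate : (pairForm V).Nondegenerate := by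
  refine (LinearMap.IsRefl.nondegenerate_iff_separatingLeft
    fun a b => pairForm_isSymm.isRefl a b).mpr fun a ha => ?_
  have h₁ : a.1 = 0 := (Module.forall_dual_apply_eq_zero_iff ℝ a.1).mp fun η => by
    simpa [pairE] using ha (0, η)
  have h₂ : a.2 = 0 := LinearMap.ext fun x => by simpa [pairE] using ha (x, 0)
  exact Prod.ext h₁ h₂

theorem pairE_inr_left (η : Module.Dual ℝ V) (a : V × Module.Dual ℝ V) :
    pairE (0, η) a = η a.1 / 2 := by
  simp only [pairE, map_zero, add_zero]; ring

end Pairing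

section ProjectionBivector

variable {R V : Type*} [CommRing R] [AddCommGroup V] [Module R V]
  {D₁ D₂ : Submodule R (V × Module.Dual R V)}

/-- `β = π ∘ P_{D₁}|_{V*}`, with `P_{D₁}` the projection onto `D₁` along `D₂`. -/
def projectionBivector (h : IsCompl D₁ D₂) : Module.Dual R V →ₗ[R] V :=
  LinearMap.fst R V _ ∘ₗ D₁.projection D₂ h ∘ₗ LinearMap.inr R V _

theorem projectionBivector_apply (h : IsCompl D₁ D₂) (ξ : Module.Dual R V) :
    projectionBivector h ξ = (D₁.projection D₂ h (0, ξ)).1 := rfl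

theorem projectionBivector_sub_snd {d₁ d₂ : V × Module.Dual R V} (h : IsCompl D₁ D₂)
    (hd₁ : d₁ ∈ D₁) (hd₂ : d₂ ∈ D₂) (hfst : d₁.1 = d₂.1) :
    projectionBivector h (d₁.2 - d₂.2) = d₁.1 := by
  have hdiff : ((0 : V), d₁.2 - d₂.2) = d₁ - d₂ := Prod.ext (by simp [hfst]) rfl
  rw [projectionBivector_apply, hdiff, map_sub, Submodule.projection_apply_of_mem_left h hd₁,
    Submodule.projection_apply_of_mem_right h hd₂, sub_zero]

theorem exists_fst_eq_and_snd_sub_eq (h : IsCompl D₁ D₂) (ζ : Module.Dual R V) :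
    ∃ d₁ ∈ D₁, ∃ d₂ ∈ D₂, d₁.1 = d₂.1 ∧ d₁.2 - d₂.2 = ζ := by
  set P := D₁.projection D₂ h
  refine ⟨P (0, ζ), by simp [P], P (0, ζ) - (0, ζ), ?_, by simp, by simp⟩
  simpa using D₂.neg_mem (Submodule.sub_projection_mem h ((0 : V), ζ))

end ProjectionBivector

theorem projectionBivector_skew {V : Type*} [AddCommGroup V] [Module ℝ V]
    {D₁ D₂ : Submodule ℝ (V × Module.Dual ℝ V)}
    (h₁ : ∀ a ∈ D₁, ∀ b ∈ D₁, pairE a b = 0) (h₂ : ∀ a ∈ D₂, ∀ b ∈ D₂, pairE a b = 0)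
    (h : IsCompl D₁ D₂) (ξ η : Module.Dual ℝ V) :
    η (projectionBivector h ξ) = -(ξ (projectionBivector h η)) := by
  have := (pairForm V).apply_projection_add_apply_projection pairForm_isSymm h₁ h₂ h (0, η) (0, ξ)
  simp only [pairForm_apply, pairE_inr_left, ← projectionBivector_apply, map_zero] at this
  linarith

theorem baer_sum_transverse_dirac_is_poisson_graph
    {V : Type*} [AddCommGroup V] [Module ℝ V] [FiniteDimensional ℝ V]
    (D₁ D₂ : Submodule ℝ (V × Module.Dual ℝ V))
    (h₁iso : ∀ a ∈ D₁, ∀ b ∈ D₁, pairE a b = 0)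
    (h₂iso : ∀ a ∈ D₂, ∀ b ∈ D₂, pairE a b = 0)
    (h₁max : ∀ e, (∀ d ∈ D₁, pairE e d = 0) → e ∈ D₁)
    (h₂max : ∀ e, (∀ d ∈ D₂, pairE e d = 0) → e ∈ D₂)
    (hdisj : D₁ ⊓ D₂ = ⊥) :
    -- (a) K meets the fibre product D₁ ⊕_V D₂ trivially
    (∀ ξ : Module.Dual ℝ V, ((0 : V), -ξ) ∈ D₁ → ((0 : V), ξ) ∈ D₂ → ξ = 0) ∧
    -- (b),(c): the Baer sum D₁^⊤ ⊠ D₂ is the graph of the skew map β = π ∘ P_{D₁}|_{V*}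
    ∃ β : Module.Dual ℝ V →ₗ[ℝ] V,
      -- β is π ∘ P_{D₁} restricted to V*
      (∀ ξ : Module.Dual ℝ V, ∃ d₁ ∈ D₁, ∃ d₂ ∈ D₂,
        ((0 : V), ξ) = d₁ + d₂ ∧ β ξ = d₁.1) ∧
      -- β is skew-symmetric
      (∀ ξ η : Module.Dual ℝ V, η (β ξ) = -(ξ (β η))) ∧
      -- D₁^⊤ ⊠ D₂ ⊆ Γ_β ...
      (∀ d₁ ∈ D₁, ∀ d₂ ∈ D₂, d₁.1 = d₂.1 → β (d₁.2 - d₂.2) = d₁.1) ∧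
      -- ... and every point of Γ_β arises this way
      (∀ ζ : Module.Dual ℝ V, ∃ d₁ ∈ D₁, ∃ d₂ ∈ D₂,
        d₁.1 = d₂.1 ∧ d₁.2 - d₂.2 = ζ) := by
  have hrefl := (pairForm_isSymm (V := V)).isRefl
  have hcompl : IsCompl D₁ D₂ :=
    hrefl.isCompl_of_orthogonal_eq_self pairForm_nondegenerate
      (hrefl.orthogonal_eq_self_of_isotropic_of_maximal h₁iso h₁max)
      (hrefl.orthogonal_eq_self_of_isotropic_of_maximal h₂iso h₂max) hdisj
  refine ⟨fun ξ hξ₁ hξ₂ => ?_, projectionBivector hcompl, fun ξ => ?_,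
    projectionBivector_skew h₁iso h₂iso hcompl,
    fun d₁ hd₁ d₂ hd₂ => projectionBivector_sub_snd hcompl hd₁ hd₂,
    exists_fst_eq_and_snd_sub_eq hcompl⟩
  · have hξ₁' : ((0 : V), ξ) ∈ D₁ := by simpa using D₁.neg_mem hξ₁
    exact congrArg Prod.snd (Submodule.disjoint_def.mp hcompl.disjoint _ hξ₁' hξ₂)
  · exact ⟨_, Submodule.projection_apply_mem hcompl _, _, Submodule.sub_projection_mem hcompl _,
      (add_sub_cancel _ _).symm, rfl⟩
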